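/- Let C > 0 and suppose that lim_{m→∞} (1/√m)·∫₀¹ |W_m(ω)| dω = C. Then liminf_{m→∞} (1/√m)·∫₀¹ |S_m(ω)| dω ≥ (√2 − 1)·C. -/

import Mathlib

/-!
Since `(2j - 1)² = 4(j² - j) + 1`, the odd-index terms of `W_{2m}(θ)` add up to
`exp(2πiθ) S_m(4θ)`, while the even-index ones are `W_m(4θ)`. All sums are 1-periodic, so the
substitution `ω = 4θ` preserves their `L¹` norms over a period, and the triangle inequality gives
`|‖S_m‖₁ - ‖W_{2m}‖₁| ≤ ‖W_m‖₁`. After dividing by `√m = √(2m) / √2`, the lower bound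
`√2 ‖W_{2m}‖₁ / √(2m) - ‖W_m‖₁ / √m` tends to `√2 C - C`.
-/

open MeasureTheory Real

/-- The quadratic Weyl sum `S_m(ω) = ∑_{j=1}^m exp(2πiω(j²-j))`. -/
noncomputable def S (ω : ℝ) (m : ℕ) : ℂ :=
  ∑ j ∈ Finset.Icc 1 m,
    Complex.exp (2 * (Real.pi : ℂ) * Complex.I * (ω : ℂ) * ((j : ℂ) ^ 2 - (j : ℂ)))

/-- The purely quadratic Weyl sum `W_m(ω) = ∑_{j=1}^m exp(2πiωj²)`, with `W_0 = 0`. -/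
noncomputable def W (ω : ℝ) (m : ℕ) : ℂ :=
  ∑ j ∈ Finset.Icc 1 m,
    Complex.exp (2 * (Real.pi : ℂ) * Complex.I * (ω : ℂ) * (j : ℂ) ^ 2)

open Filter Topology Complex intervalIntegral

theorem Function.Periodic.intervalIntegral_comp_natCast_mul {E : Type*} [NormedAddCommGroup E]
    [NormedSpace ℝ E] {f : ℝ → E} {T : ℝ} (hf : Function.Periodic f T)
    (h_int : ∀ a b, IntervalIntegrable f volume a b) {n : ℕ} (hn : n ≠ 0) :
    ∫ x in (0:ℝ)..T, f (n * x) = ∫ x in (0:ℝ)..T, f x := by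
  have hn' : (n : ℝ) ≠ 0 := Nat.cast_ne_zero.mpr hn
  have := hf.intervalIntegral_add_zsmul_eq n 0 h_int
  simp only [zero_add, natCast_zsmul, ← Nat.cast_smul_eq_nsmul ℝ, smul_eq_mul] at this
  rw [integral_comp_mul_left f hn', mul_zero, this, smul_smul, inv_mul_cancel₀ hn', one_smul]

theorem Filter.le_liminf_of_abs_sub_le {α : Type*} {l : Filter α} [l.NeBot] {b u v : α → ℝ}
    {L M : ℝ} (hu : Tendsto u l (𝓝 L)) (hv : Tendsto v l (𝓝 M))
    (h : ∀ᶠ x in l, |b x - u x| ≤ v x) :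
    L - M ≤ liminf b l := by
  have hlow : ∀ᶠ x in l, u x - v x ≤ b x :=
    h.mono fun x hx => by linarith [neg_abs_le (b x - u x)]
  have hupp : ∀ᶠ x in l, b x ≤ u x + v x :=
    h.mono fun x hx => by linarith [le_abs_self (b x - u x)]
  have hcob : IsCoboundedUnder (· ≥ ·) l b :=
    ((hu.add hv).isBoundedUnder_le.mono_le hupp).isCoboundedUnder_ge
  rw [← (hu.sub hv).liminf_eq]
  exact liminf_le_liminf hlow (hu.sub hv).isBoundedUnder_ge hcob

theorem exp_two_pi_I_mul_add_one_mul_intCast (ω : ℝ) (n : ℤ) :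
    exp (2 * π * I * ((ω + 1 : ℝ) : ℂ) * n) = exp (2 * π * I * ω * n) := by
  rw [show 2 * π * I * ((ω + 1 : ℝ) : ℂ) * n = 2 * π * I * ω * n + n * (2 * π * I) by
    push_cast; ring, Complex.exp_add, exp_int_mul_two_pi_mul_I, mul_one]

theorem periodic_S (m : ℕ) : Function.Periodic (fun ω => S ω m) 1 := fun ω =>
  Finset.sum_congr rfl fun j _ => by
    have := exp_two_pi_I_mul_add_one_mul_intCast ω ((j : ℤ) ^ 2 - j)
    exact_mod_cast this

theorem periodic_W (m : ℕ) : Function.Periodic (fun ω => W ω m) 1 := fun ω =>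
  Finset.sum_congr rfl fun j _ => by
    have := exp_two_pi_I_mul_add_one_mul_intCast ω ((j : ℤ) ^ 2)
    exact_mod_cast this

theorem continuous_S (m : ℕ) : Continuous fun ω => S ω m := by
  unfold S; fun_prop

theorem continuous_W (m : ℕ) : Continuous fun ω => W ω m := by
  unfold W; fun_prop

theorem W_two_mul_sub_W_four_mul (θ : ℝ) (m : ℕ) :
    W θ (2 * m) - W (4 * θ) m = exp (2 * π * I * θ) * S (4 * θ) m := by
  induction m with
  | zero => simp [W, S]
  | succ n ih =>
    rw [show 2 * (n + 1) = 2 * n + 1 + 1 by ring]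
    simp only [W, S] at ih ⊢
    rw [Finset.sum_Icc_succ_top (by omega), Finset.sum_Icc_succ_top (by omega),
      Finset.sum_Icc_succ_top (by omega), Finset.sum_Icc_succ_top (by omega),
      mul_add, ← ih, ← Complex.exp_add]
    push_cast
    ring_nf

theorem norm_S_four_mul (θ : ℝ) (m : ℕ) :
    ‖S (4 * θ) m‖ = ‖W θ (2 * m) - W (4 * θ) m‖ := by
  rw [W_two_mul_sub_W_four_mul, norm_mul, Complex.norm_exp]
  simp

theorem abs_integral_norm_S_sub_le (m : ℕ) :
    |(∫ ω in (0:ℝ)..1, ‖S ω m‖) - ∫ ω in (0:ℝ)..1, ‖W ω (2 * m)‖|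
      ≤ ∫ ω in (0:ℝ)..1, ‖W ω m‖ := by
  have comp_four_mul {g : ℝ → ℂ} (hg : Continuous g) (hper : Function.Periodic g 1) :
      ∫ θ in (0:ℝ)..1, ‖g (4 * θ)‖ = ∫ ω in (0:ℝ)..1, ‖g ω‖ := by
    exact_mod_cast (hper.comp (‖·‖)).intervalIntegral_comp_natCast_mul
      (fun a b => hg.norm.intervalIntegrable a b) four_ne_zero
  have hS : Continuous fun θ => S (4 * θ) m := (continuous_S m).comp (continuous_const_mul 4)
  have hW₂ := continuous_W (2 * m)
  have hW : Continuous fun θ => W (4 * θ) m := (continuous_W m).comp (continuous_const_mul 4)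
  rw [← comp_four_mul (continuous_S m) (periodic_S m),
    ← comp_four_mul (continuous_W m) (periodic_W m),
    ← integral_sub (hS.norm.intervalIntegrable _ _) (hW₂.norm.intervalIntegrable _ _)]
  refine (abs_integral_le_integral_abs zero_le_one).trans <|
    integral_mono_on zero_le_one ((hS.norm.sub hW₂.norm).abs.intervalIntegrable _ _)
      (hW.norm.intervalIntegrable _ _) fun θ _ => ?_
  rw [norm_S_four_mul]
  simpa using abs_norm_sub_norm_le (W θ (2 * m) - W (4 * θ) m) (W θ (2 * m))

theorem stmt_14_general (C : ℝ)
    (h : Filter.Tendsto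
      (fun m : ℕ => (1 / Real.sqrt m) * ∫ ω in (0:ℝ)..1, ‖W ω m‖)
      Filter.atTop (nhds C)) :
    (Real.sqrt 2 - 1) * C ≤
      Filter.liminf
        (fun m : ℕ => (1 / Real.sqrt m) * ∫ ω in (0:ℝ)..1, ‖S ω m‖)
        Filter.atTop := by
  have h2 : Tendsto (fun m : ℕ => √2 * ((1 / √((2 * m : ℕ) : ℝ)) *
      ∫ ω in (0:ℝ)..1, ‖W ω (2 * m)‖)) atTop (𝓝 (√2 * C)) :=
    (h.comp (tendsto_id.const_mul_atTop' two_pos)).const_mul _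
  have hscale (m : ℕ) : √2 * (1 / √((2 * m : ℕ) : ℝ)) = 1 / √m := by
    push_cast
    rw [Real.sqrt_mul zero_le_two, mul_one_div, ← div_div, div_self (by positivity)]
  rw [show (√2 - 1) * C = √2 * C - C by ring]
  refine le_liminf_of_abs_sub_le h2 h (Eventually.of_forall fun m => ?_)
  rw [← mul_assoc, hscale, ← mul_sub, abs_mul, abs_of_nonneg (by positivity)]
  exact mul_le_mul_of_nonneg_left (abs_integral_norm_S_sub_le m) (by positivity)

/-- If `(1/√m) ∫₀¹ |W_m(ω)| dω → C > 0`, then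
`liminf_{m→∞} (1/√m) ∫₀¹ |S_m(ω)| dω ≥ (√2 - 1) C`. -/
theorem stmt_14 (C : ℝ) (hC : 0 < C)
    (h : Filter.Tendsto
      (fun m : ℕ => (1 / Real.sqrt m) * ∫ ω in (0:ℝ)..1, ‖W ω m‖)
      Filter.atTop (nhds C)) :
    (Real.sqrt 2 - 1) * C ≤
      Filter.liminf
        (fun m : ℕ => (1 / Real.sqrt m) * ∫ ω in (0:ℝ)..1, ‖S ω m‖)
        Filter.atTop :=
  stmt_14_general C h
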